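/- arXiv:1708.02754 — 10 statements merged into one kernel-verified Lean document; each statement's English description precedes it below -/
import Mathlib

section
/- Let A be a unital associative ℂ-algebra, let a,b,c ∈ ℂ with a ≠ 2, and let x,y ∈ A satisfy relations (R1), (R2) and (R4) of the A₃(a,b,c) relations, i.e. x²y − yx² = xy² − y²x, (yx)(x+y) − (x+y)(yx) = a(x³−y³) + b(x²−y²) − c(x−y), and a(y³x − yx³) = −b(y²x − yx²). Then relation (R3) also holds: a(xy³ − x³y) = −b(y²x − yx²). -/
/-- If `a ≠ 2`, relation (R3) of `A₃(a,b,c)` follows from relations (R1), (R2), (R4). -/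
theorem A3_rel3_of_rel1_rel2_rel4 {A : Type*} [Ring A] [Algebra ℂ A]
    (a b c : ℂ) (ha : a ≠ 2) (x y : A)
    (h1 : x ^ 2 * y - y * x ^ 2 = x * y ^ 2 - y ^ 2 * x)
    (h2 : (y * x) * (x + y) - (x + y) * (y * x) =
      a • (x ^ 3 - y ^ 3) + b • (x ^ 2 - y ^ 2) - c • (x - y))
    (h4 : a • (y ^ 3 * x - y * x ^ 3) = -b • (y ^ 2 * x - y * x ^ 2)) :
    a • (x * y ^ 3 - x ^ 3 * y) = -b • (y ^ 2 * x - y * x ^ 2) := by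
  suffices hs : a • (x * y ^ 3 - x ^ 3 * y) = a • (y ^ 3 * x - y * x ^ 3) by
    rw [hs, h4]
  have d1 : x ^ 2 * y - y * x ^ 2 - (x * y ^ 2 - y ^ 2 * x) = 0 :=
    sub_eq_zero_of_eq h1
  have d2 : (y * x) * (x + y) - (x + y) * (y * x) -
      (a • (x ^ 3 - y ^ 3) + b • (x ^ 2 - y ^ 2) - c • (x - y)) = 0 :=
    sub_eq_zero_of_eq h2
  have key : (a - 2) • (a • (x * y ^ 3 - x ^ 3 * y)) =
      (a - 2) • (a • (y ^ 3 * x - y * x ^ 3)) := by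
    have iden : (a - 2) • (a • (x * y ^ 3 - x ^ 3 * y)) -
        (a - 2) • (a • (y ^ 3 * x - y * x ^ 3)) =
        a • (b • (x ^ 2 * y - y * x ^ 2 - (x * y ^ 2 - y ^ 2 * x)) +
          (x ^ 2 * y - y * x ^ 2 - (x * y ^ 2 - y ^ 2 * x)) * x +
          (2 : ℂ) • ((x ^ 2 * y - y * x ^ 2 - (x * y ^ 2 - y ^ 2 * x)) * y) +
          (2 : ℂ) • (x * (x ^ 2 * y - y * x ^ 2 - (x * y ^ 2 - y ^ 2 * x))) +
          y * (x ^ 2 * y - y * x ^ 2 - (x * y ^ 2 - y ^ 2 * x)) -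
          ((y * x) * (x + y) - (x + y) * (y * x) -
            (a • (x ^ 3 - y ^ 3) + b • (x ^ 2 - y ^ 2) - c • (x - y))) * x +
          ((y * x) * (x + y) - (x + y) * (y * x) -
            (a • (x ^ 3 - y ^ 3) + b • (x ^ 2 - y ^ 2) - c • (x - y))) * y +
          x * ((y * x) * (x + y) - (x + y) * (y * x) -
            (a • (x ^ 3 - y ^ 3) + b • (x ^ 2 - y ^ 2) - c • (x - y))) -
          y * ((y * x) * (x + y) - (x + y) * (y * x) -
            (a • (x ^ 3 - y ^ 3) + b • (x ^ 2 - y ^ 2) - c • (x - y)))) := by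
      simp only [smul_sub, smul_add, smul_smul, mul_sub, sub_mul, mul_add, add_mul,
        mul_smul_comm, smul_mul_assoc, pow_succ, pow_zero, one_mul, mul_assoc]
      module
    rw [d1, d2] at iden
    simp only [smul_zero, zero_mul, mul_zero, add_zero, zero_add, sub_zero,
      zero_sub, neg_zero] at iden
    exact sub_eq_zero.mp iden
  have hinj : Function.Injective (fun z : A => (a - 2) • z) :=
    smul_right_injective A (sub_ne_zero.mpr ha)
  exact hinj key
end

section
/- Let A be a unital associative ℂ-algebra, let q ∈ ℂ, and let x,y ∈ A satisfy the Hecke quadratic relations (x−1)(x−q) = 0 and (y−1)(y−q) = 0. Then the pair (x,y) satisfies the A₃(0,0,−q) relations if and only if the braid relation xyx = yxy holds. (This expresses that the Hecke algebra H_n(q) is the coset of A_n(0,0,−q) by the Hecke quadratic relation.) -/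
/-!
Both Hecke generators satisfy the same quadratic `z ^ 2 = (q + 1) z - q`. Substituting it into
the relations of `A₃(0,0,-q)` makes (R1) an identity, turns the left side of (R2) into
`(yxy - xyx) + q (x - y)`, and leaves (R3)–(R5) as `0 = 0`; so (R2) is exactly the braid relation.
-/

/-- The pair `(x, y)` satisfies the defining relations of the algebra `A₃(a,b,c)`. -/
def SatisfiesA3 {A : Type*} [Ring A] [Algebra ℂ A] (a b c : ℂ) (x y : A) : Prop :=
  x ^ 2 * y - y * x ^ 2 = x * y ^ 2 - y ^ 2 * x ∧
  (y * x) * (x + y) - (x + y) * (y * x) =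
    a • (x ^ 3 - y ^ 3) + b • (x ^ 2 - y ^ 2) - c • (x - y) ∧
  a • (x * y ^ 3 - x ^ 3 * y) = -b • (y ^ 2 * x - y * x ^ 2) ∧
  a • (y ^ 3 * x - y * x ^ 3) = -b • (y ^ 2 * x - y * x ^ 2) ∧
  a ^ 2 • (y ^ 4 * x - y * x ^ 4) = (b ^ 2 + a * c) • (y ^ 2 * x - y * x ^ 2)

section QuadraticPair

variable {R A : Type*} [CommRing R] [Ring A] [Algebra R A]

theorem sq_eq_of_hecke {q : R} {x : A} (hx : (x - 1) * (x - q • (1 : A)) = 0) :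
    x ^ 2 = (q + 1) • x + (-q) • (1 : A) := by
  rw [← sub_eq_zero, ← hx]
  simp only [sub_mul, mul_sub, mul_smul_comm, mul_one, one_mul, sq, add_smul, neg_smul,
    one_smul, smul_sub]
  abel

variable {s t : R} {x y : A}

theorem sq_mul_sub_mul_sq_of_quadratic (hx : x ^ 2 = s • x + t • (1 : A))
    (hy : y ^ 2 = s • y + t • (1 : A)) :
    x ^ 2 * y - y * x ^ 2 = x * y ^ 2 - y ^ 2 * x := by
  rw [hx, hy]
  simp only [add_mul, mul_add, smul_mul_assoc, mul_smul_comm, one_mul, mul_one]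
  abel

theorem commutator_mul_add_of_quadratic (hx : x ^ 2 = s • x + t • (1 : A))
    (hy : y ^ 2 = s • y + t • (1 : A)) :
    (y * x) * (x + y) - (x + y) * (y * x) = (y * x * y - x * y * x) + t • (y - x) := by
  have expand : (y * x) * (x + y) - (x + y) * (y * x)
      = y * x ^ 2 - y ^ 2 * x + (y * x * y - x * y * x) := by noncomm_ring
  rw [expand, hx, hy]
  simp only [add_mul, mul_add, smul_mul_assoc, mul_smul_comm, one_mul, mul_one, smul_sub]
  abel

end QuadraticPair

theorem satisfiesA3_zero_zero_iff {A : Type*} [Ring A] [Algebra ℂ A] (c : ℂ) (x y : A) :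
    SatisfiesA3 0 0 c x y ↔
      x ^ 2 * y - y * x ^ 2 = x * y ^ 2 - y ^ 2 * x ∧
      (y * x) * (x + y) - (x + y) * (y * x) = -(c • (x - y)) := by
  simp [SatisfiesA3]

/-- For elements satisfying the Hecke quadratic relations, the `A₃(0,0,-q)` relations
are equivalent to the braid relation: the Hecke algebra is the coset of `A₃(0,0,-q)`
by the Hecke quadratic relation. -/
theorem hecke_coset_A3 {A : Type*} [Ring A] [Algebra ℂ A] (q : ℂ) (x y : A)
    (hx : (x - 1) * (x - q • (1 : A)) = 0) (hy : (y - 1) * (y - q • (1 : A)) = 0) :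
    SatisfiesA3 0 0 (-q) x y ↔ x * y * x = y * x * y := by
  have hx2 := sq_eq_of_hecke hx
  have hy2 := sq_eq_of_hecke hy
  rw [satisfiesA3_zero_zero_iff, commutator_mul_add_of_quadratic hx2 hy2,
    and_iff_right (sq_mul_sub_mul_sq_of_quadratic hx2 hy2)]
  have twist : (-q) • (y - x) = -((-q) • (x - y)) := by rw [← smul_neg, neg_sub]
  rw [twist, add_eq_right, sub_eq_zero, eq_comm]
end

section
/- Let A be a unital associative ℂ-algebra, let b ∈ ℂ with b ≠ 0, and let τ₁,τ₂ ∈ A. Set σ₁ = τ₁ − b and σ₂ = τ₂ − b. Then the following are equivalent: (1) τ₁,τ₂ satisfy the braid relation τ₁τ₂τ₁ = τ₂τ₁τ₂ together with the two relations τ₂²τ₁ − τ₂τ₁² = b²(τ₁ − τ₂) − b(τ₁² − τ₂²) and τ₁²τ₂ − τ₁τ₂² = b²(τ₂ − τ₁) − b(τ₂² − τ₁²); (2) the pair (σ₁,σ₂) satisfies the A₃(0,b,−b²) relations. (This expresses that A_n(0,b,−b²) is a coset of the braid algebra.) -/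
theorem key {A : Type*} [Ring A] [Algebra ℂ A] (b : ℂ) (hb : b ≠ 0) (x y : A) :
    ((x + b•(1:A)) * (y + b•(1:A)) * (x + b•(1:A)) = (y + b•(1:A)) * (x + b•(1:A)) * (y + b•(1:A)) ∧
      (y + b•(1:A)) ^ 2 * (x + b•(1:A)) - (y + b•(1:A)) * (x + b•(1:A)) ^ 2 =
        b ^ 2 • ((x + b•(1:A)) - (y + b•(1:A))) - b • ((x + b•(1:A)) ^ 2 - (y + b•(1:A)) ^ 2) ∧
      (x + b•(1:A)) ^ 2 * (y + b•(1:A)) - (x + b•(1:A)) * (y + b•(1:A)) ^ 2 =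
        b ^ 2 • ((y + b•(1:A)) - (x + b•(1:A))) - b • ((y + b•(1:A)) ^ 2 - (x + b•(1:A)) ^ 2)) ↔
    SatisfiesA3 0 b (-b ^ 2) x y := by
  constructor
  · rintro ⟨h1, h2, h3⟩
    -- derive hS : y^2*x = y*x^2 from h2
    have hS : y ^ 2 * x = y * x ^ 2 := by
      have e : y ^ 2 * x - y * x ^ 2 =
          ((y + b•(1:A)) ^ 2 * (x + b•(1:A)) - (y + b•(1:A)) * (x + b•(1:A)) ^ 2) -
          (b ^ 2 • ((x + b•(1:A)) - (y + b•(1:A))) - b • ((x + b•(1:A)) ^ 2 - (y + b•(1:A)) ^ 2)) := by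
        noncomm_ring; module
      have := sub_eq_zero.mpr h2
      rw [← sub_eq_zero, e, this]
    have hS' : x ^ 2 * y = x * y ^ 2 := by
      have e : x ^ 2 * y - x * y ^ 2 =
          ((x + b•(1:A)) ^ 2 * (y + b•(1:A)) - (x + b•(1:A)) * (y + b•(1:A)) ^ 2) -
          (b ^ 2 • ((y + b•(1:A)) - (x + b•(1:A))) - b • ((y + b•(1:A)) ^ 2 - (x + b•(1:A)) ^ 2)) := by
        noncomm_ring; module
      have := sub_eq_zero.mpr h3
      rw [← sub_eq_zero, e, this]
    have hB : y * x * y - x * y * x = b • (x ^ 2 - y ^ 2) + b ^ 2 • (x - y) := by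
      have e : (y * x * y - x * y * x) - (b • (x ^ 2 - y ^ 2) + b ^ 2 • (x - y)) =
          ((y + b•(1:A)) * (x + b•(1:A)) * (y + b•(1:A)) -
            (x + b•(1:A)) * (y + b•(1:A)) * (x + b•(1:A))) := by
        noncomm_ring; module
      rw [← sub_eq_zero, e, h1, sub_self]
    refine ⟨by rw [hS', hS], ?_, ?_, ?_, ?_⟩
    · have e : (y * x) * (x + y) - (x + y) * (y * x) =
          (y * x * y - x * y * x) + (y * x ^ 2 - y ^ 2 * x) := by noncomm_ring
      rw [e, hB, hS, sub_self, add_zero]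
      module
    · rw [hS]; simp
    · rw [hS]; simp
    · rw [hS]; simp
  · rintro ⟨c1, c2, c3, c4, c5⟩
    have hS : y ^ 2 * x = y * x ^ 2 := by
      have h0 : -b • (y ^ 2 * x - y * x ^ 2) = 0 := by rw [← c3, zero_smul]
      have := congrArg (fun z => (-b)⁻¹ • z) h0
      simp only [smul_smul, smul_zero] at this
      rw [inv_mul_cancel₀ (neg_ne_zero.mpr hb), one_smul, sub_eq_zero] at this
      exact this
    have hS' : x ^ 2 * y = x * y ^ 2 := by
      rw [← sub_eq_zero]
      have e : x ^ 2 * y - x * y ^ 2 = (x ^ 2 * y - y * x ^ 2) - (x * y ^ 2 - y ^ 2 * x)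
          + (y * x ^ 2 - y ^ 2 * x) := by noncomm_ring
      rw [e, c1, sub_self, zero_add, ← hS, sub_self]
    have hB : y * x * y - x * y * x = b • (x ^ 2 - y ^ 2) + b ^ 2 • (x - y) := by
      rw [← sub_eq_zero]
      have e : (y * x * y - x * y * x) - (b • (x ^ 2 - y ^ 2) + b ^ 2 • (x - y)) =
          ((y * x) * (x + y) - (x + y) * (y * x)
            - ((0:ℂ) • (x ^ 3 - y ^ 3) + b • (x ^ 2 - y ^ 2) - (-b ^ 2) • (x - y)))
          - (y * x ^ 2 - y ^ 2 * x) := by noncomm_ring; match_scalars <;> simp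
      rw [e, c2, sub_self, zero_sub, ← hS, sub_self, neg_zero]
    refine ⟨?_, ?_, ?_⟩
    · rw [← sub_eq_zero]
      have e : (x + b•(1:A)) * (y + b•(1:A)) * (x + b•(1:A)) -
          (y + b•(1:A)) * (x + b•(1:A)) * (y + b•(1:A)) =
          -((y * x * y - x * y * x) - (b • (x ^ 2 - y ^ 2) + b ^ 2 • (x - y))) := by
        noncomm_ring; module
      rw [e, hB, sub_self, neg_zero]
    · rw [← sub_eq_zero]
      have e : (y + b•(1:A)) ^ 2 * (x + b•(1:A)) - (y + b•(1:A)) * (x + b•(1:A)) ^ 2 -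
          (b ^ 2 • ((x + b•(1:A)) - (y + b•(1:A))) - b • ((x + b•(1:A)) ^ 2 - (y + b•(1:A)) ^ 2)) =
          y ^ 2 * x - y * x ^ 2 := by noncomm_ring; module
      rw [e, hS, sub_self]
    · rw [← sub_eq_zero]
      have e : (x + b•(1:A)) ^ 2 * (y + b•(1:A)) - (x + b•(1:A)) * (y + b•(1:A)) ^ 2 -
          (b ^ 2 • ((y + b•(1:A)) - (x + b•(1:A))) - b • ((y + b•(1:A)) ^ 2 - (x + b•(1:A)) ^ 2)) =
          x ^ 2 * y - x * y ^ 2 := by noncomm_ring; module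
      rw [e, hS', sub_self]

/-- `A₃(0,b,-b²)` (for `b ≠ 0`) is a coset of the braid algebra: with `σᵢ = τᵢ - b`,
the braid relation together with two cubic relations on the `τᵢ` is equivalent to the
`A₃(0,b,-b²)` relations for the `σᵢ`. -/
theorem A3_coset_braid {A : Type*} [Ring A] [Algebra ℂ A] (b : ℂ) (hb : b ≠ 0)
    (τ₁ τ₂ : A) :
    (τ₁ * τ₂ * τ₁ = τ₂ * τ₁ * τ₂ ∧
      τ₂ ^ 2 * τ₁ - τ₂ * τ₁ ^ 2 = b ^ 2 • (τ₁ - τ₂) - b • (τ₁ ^ 2 - τ₂ ^ 2) ∧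
      τ₁ ^ 2 * τ₂ - τ₁ * τ₂ ^ 2 = b ^ 2 • (τ₂ - τ₁) - b • (τ₂ ^ 2 - τ₁ ^ 2)) ↔
    SatisfiesA3 0 b (-b ^ 2) (τ₁ - b • (1 : A)) (τ₂ - b • (1 : A)) := by
  have := key b hb (τ₁ - b • (1 : A)) (τ₂ - b • (1 : A))
  simpa [sub_add_cancel] using this
end

section
/- Let a,b,c ∈ ℂ with a ≠ 0 and let λ,μ ∈ ℂ. The pair (λ,μ), regarded as a pair of elements of the commutative ℂ-algebra ℂ, satisfies the A₃(a,b,c) relations if and only if λ = μ, or both λ and μ belong to the set {0} ∪ {t ∈ ℂ : a·t² + b·t − c = 0}. (The nonzero values in this set are λ₀^± = (−b ± √(b²+4ac))/(2a).) -/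
/-- Classification of the scalar representations of `A₃(a,b,c)` for `a ≠ 0`:
either the two scalars are equal, or both lie in `{0} ∪ {t | at² + bt - c = 0}`. -/
theorem A3_scalar_classification (a b c : ℂ) (ha : a ≠ 0) (l m : ℂ) :
    SatisfiesA3 a b c l m ↔
      l = m ∨
        (l ∈ ({0} : Set ℂ) ∪ {t : ℂ | a * t ^ 2 + b * t - c = 0} ∧
         m ∈ ({0} : Set ℂ) ∪ {t : ℂ | a * t ^ 2 + b * t - c = 0}) := by
  simp only [SatisfiesA3, smul_eq_mul, Set.mem_union, Set.mem_singleton_iff,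
    Set.mem_setOf_eq]
  constructor
  · rintro ⟨-, h2, h3, -, h5⟩
    by_cases hlm : l = m
    · exact Or.inl hlm
    right
    have hml : m - l ≠ 0 := sub_ne_zero.mpr (fun h => hlm h.symm)
    have hlm' : l - m ≠ 0 := sub_ne_zero.mpr hlm
    have key2 : (l - m) * (a * (l^2 + l*m + m^2) + b * (l + m) - c) = 0 := by
      linear_combination -h2
    have hE : a * (l^2 + l*m + m^2) + b * (l + m) - c = 0 :=
      (mul_eq_zero.mp key2).resolve_left hlm'
    by_cases hl0 : l = 0
    · subst hl0
      have hm : a * m^2 + b * m - c = 0 := by linear_combination hE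
      exact ⟨Or.inl rfl, Or.inr hm⟩
    by_cases hm0 : m = 0
    · subst hm0
      have hl : a * l^2 + b * l - c = 0 := by linear_combination hE
      exact ⟨Or.inr hl, Or.inl rfl⟩
    have nonzero : l * m * (m - l) ≠ 0 := mul_ne_zero (mul_ne_zero hl0 hm0) hml
    have key3 : l * m * (m - l) * (a * (l + m) + b) = 0 := by linear_combination h3
    have key5 : l * m * (m - l) * (a^2 * (l^2 + l*m + m^2) - (b^2 + a*c)) = 0 := by
      linear_combination h5
    have hs : a * (l + m) + b = 0 := (mul_eq_zero.mp key3).resolve_left nonzero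
    have hq : a^2 * (l^2 + l*m + m^2) - (b^2 + a*c) = 0 :=
      (mul_eq_zero.mp key5).resolve_left nonzero
    have hT : a^2 * l * m + a * c = 0 := by
      linear_combination -hq + (a * (l + m) - b) * hs
    have hl : a * l^2 + b * l - c = 0 := by
      have h' : a * (a * l^2 + b * l - c) = 0 := by
        linear_combination (a * l) * hs - hT
      exact (mul_eq_zero.mp h').resolve_left ha
    have hm : a * m^2 + b * m - c = 0 := by
      have h' : a * (a * m^2 + b * m - c) = 0 := by
        linear_combination (a * m) * hs - hT
      exact (mul_eq_zero.mp h').resolve_left ha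
    exact ⟨Or.inr hl, Or.inr hm⟩
  · rintro (rfl | ⟨(rfl | hl), (rfl | hm)⟩)
    · exact ⟨by ring, by ring, by ring, by ring, by ring⟩
    · exact ⟨by ring, by ring, by ring, by ring, by ring⟩
    · exact ⟨by ring, by linear_combination m * hm, by ring, by ring, by ring⟩
    · exact ⟨by ring, by linear_combination -l * hl, by ring, by ring, by ring⟩
    · refine ⟨by ring, ?_, ?_, ?_, ?_⟩
      · linear_combination (-l) * hl + m * hm
      · linear_combination (-(l*m)) * hl + (l*m) * hm
      · linear_combination (-(l*m)) * hl + (l*m) * hm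
      · linear_combination (l*m*(b - a*l)) * hl + (l*m*(a*m - b)) * hm
end

section
/- For all a,b,c,μ ∈ ℂ, the 2×2 complex matrices σ₁ = [[0, c],[0, 0]] and σ₂ = [[μ, −μ²],[1, −μ]] satisfy the A₃(a,b,c) relations; i.e. the algebra A₃(a,b,c) admits a two-dimensional representation given by these matrices. -/
set_option maxHeartbeats 2000000 in
/-- The algebra `A₃(a,b,c)` admits a two-dimensional representation:
`σ₁ = [[0, c],[0, 0]]`, `σ₂ = [[μ, -μ²],[1, -μ]]`. -/
theorem A3_two_dim_rep (a b c μ : ℂ) :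
    SatisfiesA3 a b c (!![0, c; 0, 0] : Matrix (Fin 2) (Fin 2) ℂ)
      (!![μ, -μ ^ 2; 1, -μ] : Matrix (Fin 2) (Fin 2) ℂ) := by
  refine ⟨?_, ?_, ?_, ?_, ?_⟩ <;>
  · ext i j
    fin_cases i <;> fin_cases j <;>
      simp [pow_succ, pow_two, Matrix.mul_apply, Fin.sum_univ_succ, Matrix.smul_apply] <;>
      (first | (ring_nf; tauto) | ring)
end

section
/- Let A be a unital associative ℂ-algebra, let a,b,c ∈ ℂ with a ≠ 0, and let σ₁,σ₂ ∈ A be such that the pair (σ₁,σ₂) satisfies the A₃(a,b,c) relations. Then a·(σ₂³σ₁² − σ₂²σ₁³) = −c·(σ₂²σ₁ − σ₂σ₁²) and a·(σ₁²σ₂³ − σ₁³σ₂²) = −c·(σ₂²σ₁ − σ₂σ₁²). -/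
/-- Relation (2.15) of the paper: in `A₃(a,b,c)` with `a ≠ 0`,
`a(σ₂³σ₁² - σ₂²σ₁³) = -c(σ₂²σ₁ - σ₂σ₁²) = a(σ₁²σ₂³ - σ₁³σ₂²)`. -/
theorem A3_rel1_lemma {A : Type*} [Ring A] [Algebra ℂ A] (a b c : ℂ) (ha : a ≠ 0)
    (σ₁ σ₂ : A) (hrel : SatisfiesA3 a b c σ₁ σ₂) :
    a • (σ₂ ^ 3 * σ₁ ^ 2 - σ₂ ^ 2 * σ₁ ^ 3) = -c • (σ₂ ^ 2 * σ₁ - σ₂ * σ₁ ^ 2) ∧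
    a • (σ₁ ^ 2 * σ₂ ^ 3 - σ₁ ^ 3 * σ₂ ^ 2) = -c • (σ₂ ^ 2 * σ₁ - σ₂ * σ₁ ^ 2) := by
  obtain ⟨h1, h2, h3, h4, h5⟩ := hrel
  have cancel : ∀ u v : A, a • u = a • v → u = v := by
    intro u v h
    have h' := congrArg (fun z => a⁻¹ • z) h
    simpa [smul_smul, inv_mul_cancel₀ ha] using h'
  have z1 : σ₁ ^ 2 * σ₂ - σ₂ * σ₁ ^ 2 - (σ₁ * σ₂ ^ 2 - σ₂ ^ 2 * σ₁) = 0 :=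
    sub_eq_zero_of_eq h1
  have z3 : a • (σ₁ * σ₂ ^ 3 - σ₁ ^ 3 * σ₂) - -b • (σ₂ ^ 2 * σ₁ - σ₂ * σ₁ ^ 2) = 0 :=
    sub_eq_zero_of_eq h3
  have z4 : a • (σ₂ ^ 3 * σ₁ - σ₂ * σ₁ ^ 3) - -b • (σ₂ ^ 2 * σ₁ - σ₂ * σ₁ ^ 2) = 0 :=
    sub_eq_zero_of_eq h4
  have z5 : a ^ 2 • (σ₂ ^ 4 * σ₁ - σ₂ * σ₁ ^ 4) - (b ^ 2 + a * c) • (σ₂ ^ 2 * σ₁ - σ₂ * σ₁ ^ 2) = 0 :=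
    sub_eq_zero_of_eq h5
  constructor
  · apply cancel
    rw [← sub_eq_zero]
    have exp1 : a • (a • (σ₂ ^ 3 * σ₁ ^ 2 - σ₂ ^ 2 * σ₁ ^ 3)) -
        a • (-c • (σ₂ ^ 2 * σ₁ - σ₂ * σ₁ ^ 2)) =
        (-b) • (a • (σ₂ ^ 3 * σ₁ - σ₂ * σ₁ ^ 3) - -b • (σ₂ ^ 2 * σ₁ - σ₂ * σ₁ ^ 2)) +
        a • ((a • (σ₂ ^ 3 * σ₁ - σ₂ * σ₁ ^ 3) - -b • (σ₂ ^ 2 * σ₁ - σ₂ * σ₁ ^ 2)) * σ₁) +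
        a • (σ₂ * (a • (σ₂ ^ 3 * σ₁ - σ₂ * σ₁ ^ 3) - -b • (σ₂ ^ 2 * σ₁ - σ₂ * σ₁ ^ 2))) -
        (a ^ 2 • (σ₂ ^ 4 * σ₁ - σ₂ * σ₁ ^ 4) -
          (b ^ 2 + a * c) • (σ₂ ^ 2 * σ₁ - σ₂ * σ₁ ^ 2)) := by
      simp only [smul_sub, smul_add, sub_mul, mul_sub, add_mul, mul_add, smul_mul_assoc,
        mul_smul_comm, mul_assoc, pow_succ, pow_zero, one_mul, mul_one, neg_smul, smul_neg,
        smul_smul, neg_mul, mul_neg, neg_neg]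
      module
    rw [exp1, z4, zero_mul, mul_zero, z5]
    simp
  · apply cancel
    rw [← sub_eq_zero]
    have exp2 : a • (a • (σ₁ ^ 2 * σ₂ ^ 3 - σ₁ ^ 3 * σ₂ ^ 2)) -
        a • (-c • (σ₂ ^ 2 * σ₁ - σ₂ * σ₁ ^ 2)) =
        a ^ 2 • ((σ₁ ^ 2 * σ₂ - σ₂ * σ₁ ^ 2 - (σ₁ * σ₂ ^ 2 - σ₂ ^ 2 * σ₁)) * σ₂ * σ₂) +
        a ^ 2 • (σ₂ * (σ₁ ^ 2 * σ₂ - σ₂ * σ₁ ^ 2 - (σ₁ * σ₂ ^ 2 - σ₂ ^ 2 * σ₁)) * σ₂) +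
        a ^ 2 • (σ₂ * σ₂ * (σ₁ ^ 2 * σ₂ - σ₂ * σ₁ ^ 2 - (σ₁ * σ₂ ^ 2 - σ₂ ^ 2 * σ₁))) +
        a • ((a • (σ₁ * σ₂ ^ 3 - σ₁ ^ 3 * σ₂) - -b • (σ₂ ^ 2 * σ₁ - σ₂ * σ₁ ^ 2)) * σ₂) +
        a • (σ₂ * (a • (σ₁ * σ₂ ^ 3 - σ₁ ^ 3 * σ₂) - -b • (σ₂ ^ 2 * σ₁ - σ₂ * σ₁ ^ 2))) +
        (-b) • (a • (σ₂ ^ 3 * σ₁ - σ₂ * σ₁ ^ 3) - -b • (σ₂ ^ 2 * σ₁ - σ₂ * σ₁ ^ 2)) +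
        a • ((a • (σ₂ ^ 3 * σ₁ - σ₂ * σ₁ ^ 3) - -b • (σ₂ ^ 2 * σ₁ - σ₂ * σ₁ ^ 2)) * σ₁) +
        (-a) • ((a • (σ₂ ^ 3 * σ₁ - σ₂ * σ₁ ^ 3) - -b • (σ₂ ^ 2 * σ₁ - σ₂ * σ₁ ^ 2)) * σ₂) -
        (a ^ 2 • (σ₂ ^ 4 * σ₁ - σ₂ * σ₁ ^ 4) -
          (b ^ 2 + a * c) • (σ₂ ^ 2 * σ₁ - σ₂ * σ₁ ^ 2)) := by
      simp only [smul_sub, smul_add, sub_mul, mul_sub, add_mul, mul_add, smul_mul_assoc,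
        mul_smul_comm, mul_assoc, pow_succ, pow_zero, one_mul, mul_one, neg_smul, smul_neg,
        smul_smul, neg_mul, mul_neg, neg_neg]
      module
    rw [exp2, z1, z3, z4, zero_mul, zero_mul, mul_zero, mul_zero, zero_mul, zero_mul, z5]
    simp
end

section
/- Let A be a unital associative ℂ-algebra, a,b,c ∈ ℂ with a ≠ 0, and let σ₁,σ₂ ∈ A be such that (σ₁,σ₂) satisfies the A₃(a,b,c) relations. Let z,v ∈ ℂ with c·z² − b·z − a ≠ 0 and c·v² − b·v − a ≠ 0, and such that 1 − zσᵢ and 1 − vσᵢ are invertible for i = 1,2. Set Hᵢ(w) = σᵢ(1 − wσᵢ)⁻¹ and h(w) = a/(cw² − bw − a). Then H₂(v)H₁(z) − H₂(z)H₁(v) = (v−z)·h(z)·h(v)·(σ₂²σ₁ − σ₂σ₁²). -/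
/-- `H_s(w) = s * (1 - w • s)⁻¹`, with the inverse taken via `Ring.inverse`. -/
noncomputable def Hfun {A : Type*} [Ring A] [Algebra ℂ A] (s : A) (w : ℂ) : A :=
  s * Ring.inverse (1 - w • s)

/-!
Put `Y = σ₂²σ₁ - σ₂σ₁²`. The relations (R4) and (R5) say that left multiplication by `σ₂` and
right multiplication by `σ₁`, two commuting operators, act on `Y` with sum `-b/a` and product
`-c/a`. Hence every sandwich `(1 - wσ₂) Y (1 - wσ₁)` is the multiple `-(cw² - bw - a)/a` of `Y`.
Multiplying the claimed identity by `(1 - zσ₂)(1 - vσ₂)` on the left and `(1 - vσ₁)(1 - zσ₁)`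
on the right turns both sides into `(v - z) Y`, and these factors are units.
-/

section Sandwich

variable {R A : Type*} [CommRing R] [Ring A] [Algebra R A] {x y Y : A}

theorem one_sub_smul_mul_mul_one_sub_smul {β γ : R} (hβ : y * Y + Y * x = β • Y)
    (hγ : y * Y * x = γ • Y) (w : R) :
    (1 - w • y) * Y * (1 - w • x) = (1 - β * w + γ * w ^ 2) • Y := by
  have expand :
      (1 - w • y) * Y * (1 - w • x) = Y - w • (y * Y + Y * x) + w ^ 2 • (y * Y * x) := by
    simp only [sub_mul, mul_sub, one_mul, mul_one, smul_mul_assoc, mul_smul_comm, smul_sub,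
      smul_add, smul_smul, sq]
    abel
  rw [expand, hβ, hγ, smul_smul, smul_smul]
  module

theorem one_sub_smul_mul_one_sub_smul_mul_mul {f : R → R}
    (hf : ∀ w, (1 - w • y) * Y * (1 - w • x) = f w • Y) (z v : R) :
    (1 - z • y) * (1 - v • y) * Y * ((1 - v • x) * (1 - z • x)) = (f z * f v) • Y := by
  rw [show (1 - z • y) * (1 - v • y) * Y * ((1 - v • x) * (1 - z • x)) =
      (1 - z • y) * ((1 - v • y) * Y * (1 - v • x)) * (1 - z • x) by simp only [mul_assoc],
    hf v, mul_smul_comm, smul_mul_assoc, hf z, smul_smul, mul_comm]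

end Sandwich

namespace SatisfiesA3

variable {A : Type*} [Ring A] [Algebra ℂ A] {a b c : ℂ} {x y : A}

theorem mul_add_mul_eq (h : SatisfiesA3 a b c x y) (ha : a ≠ 0) :
    y * (y ^ 2 * x - y * x ^ 2) + (y ^ 2 * x - y * x ^ 2) * x =
      (-b / a) • (y ^ 2 * x - y * x ^ 2) := by
  rw [show y * (y ^ 2 * x - y * x ^ 2) + (y ^ 2 * x - y * x ^ 2) * x = y ^ 3 * x - y * x ^ 3 by
    noncomm_ring, div_eq_inv_mul, mul_smul, ← h.2.2.2.1, inv_smul_smul₀ ha]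

theorem mul_mul_eq (h : SatisfiesA3 a b c x y) (ha : a ≠ 0) :
    y * (y ^ 2 * x - y * x ^ 2) * x = (-c / a) • (y ^ 2 * x - y * x ^ 2) := by
  have hβ := h.mul_add_mul_eq ha
  have h5 : y ^ 4 * x - y * x ^ 4 = ((b ^ 2 + a * c) / a ^ 2) • (y ^ 2 * x - y * x ^ 2) := by
    rw [div_eq_inv_mul, mul_smul, ← h.2.2.2.2, inv_smul_smul₀ (pow_ne_zero 2 ha)]
  rw [show y * (y ^ 2 * x - y * x ^ 2) * x =
      y * (y * (y ^ 2 * x - y * x ^ 2) + (y ^ 2 * x - y * x ^ 2) * x)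
        + (y * (y ^ 2 * x - y * x ^ 2) + (y ^ 2 * x - y * x ^ 2) * x) * x
        - (y ^ 4 * x - y * x ^ 4) by noncomm_ring,
    hβ, h5, mul_smul_comm, smul_mul_assoc, ← smul_add, hβ, smul_smul, ← sub_smul]
  congr 1
  field_simp
  ring

end SatisfiesA3

section Hfun

variable {A : Type*} [Ring A] [Algebra ℂ A]

theorem commute_one_sub_smul (s : A) (w w' : ℂ) : Commute (1 - w • s) (1 - w' • s) :=
  ((Commute.one_left _).sub_left ((Commute.one_right s).smul_left w |>.sub_right
    (((Commute.refl s).smul_left w).smul_right w')))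

theorem one_sub_smul_mul_Hfun {s : A} {w : ℂ} (h : IsUnit (1 - w • s)) :
    (1 - w • s) * Hfun s w = s := by
  rw [Hfun, ← mul_assoc, ((Commute.one_left s).sub_left ((Commute.refl s).smul_left w)).eq,
    mul_assoc, Ring.mul_inverse_cancel _ h, mul_one]

theorem Hfun_mul_one_sub_smul {s : A} {w : ℂ} (h : IsUnit (1 - w • s)) :
    Hfun s w * (1 - w • s) = s := by
  rw [Hfun, mul_assoc, Ring.inverse_mul_cancel _ h, mul_one]

theorem one_sub_smul_mul_Hfun_mul_Hfun_mul {s t : A} {w w' : ℂ} (hs : IsUnit (1 - w' • s))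
    (ht : IsUnit (1 - w • t)) :
    (1 - w • s) * (1 - w' • s) * (Hfun s w' * Hfun t w) * ((1 - w' • t) * (1 - w • t)) =
      (1 - w • s) * (s * t) * (1 - w' • t) := by
  rw [(commute_one_sub_smul t w' w).eq]
  simp only [mul_assoc]
  rw [← mul_assoc (Hfun t w), Hfun_mul_one_sub_smul ht, ← mul_assoc (1 - w' • s),
    one_sub_smul_mul_Hfun hs]

theorem one_sub_smul_mul_Hfun_sub_Hfun_mul {s t : A} {z v : ℂ} (hsz : IsUnit (1 - z • s))
    (hsv : IsUnit (1 - v • s)) (htz : IsUnit (1 - z • t)) (htv : IsUnit (1 - v • t)) :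
    (1 - z • s) * (1 - v • s) * (Hfun s v * Hfun t z - Hfun s z * Hfun t v) *
        ((1 - v • t) * (1 - z • t)) = (v - z) • (s ^ 2 * t - s * t ^ 2) := by
  rw [mul_sub, sub_mul, one_sub_smul_mul_Hfun_mul_Hfun_mul hsv htz,
    (commute_one_sub_smul s z v).eq, (commute_one_sub_smul t v z).eq,
    one_sub_smul_mul_Hfun_mul_Hfun_mul hsz htv]
  simp only [sq, mul_sub, sub_mul, one_mul, mul_one, smul_mul_assoc, mul_smul_comm, mul_assoc]
  module

end Hfun

/-- Relation (2.17) of the paper for `A₃(a,b,c)`, `a ≠ 0`: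
`H₂(v)H₁(z) - H₂(z)H₁(v) = (v-z) h(z) h(v) (σ₂²σ₁ - σ₂σ₁²)`
where `h(w) = a/(cw² - bw - a)`. -/
theorem A3_HH_lemma {A : Type*} [Ring A] [Algebra ℂ A] (a b c : ℂ) (ha : a ≠ 0)
    (σ₁ σ₂ : A) (hrel : SatisfiesA3 a b c σ₁ σ₂)
    (z v : ℂ) (hz : c * z ^ 2 - b * z - a ≠ 0) (hv : c * v ^ 2 - b * v - a ≠ 0)
    (h1z : IsUnit (1 - z • σ₁)) (h2z : IsUnit (1 - z • σ₂))
    (h1v : IsUnit (1 - v • σ₁)) (h2v : IsUnit (1 - v • σ₂)) :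
    Hfun σ₂ v * Hfun σ₁ z - Hfun σ₂ z * Hfun σ₁ v =
      ((v - z) * (a / (c * z ^ 2 - b * z - a)) * (a / (c * v ^ 2 - b * v - a))) •
        (σ₂ ^ 2 * σ₁ - σ₂ * σ₁ ^ 2) := by
  set Y := σ₂ ^ 2 * σ₁ - σ₂ * σ₁ ^ 2
  have sandwich (w : ℂ) :
      (1 - w • σ₂) * Y * (1 - w • σ₁) = (-(c * w ^ 2 - b * w - a) / a) • Y := by
    rw [one_sub_smul_mul_mul_one_sub_smul (hrel.mul_add_mul_eq ha) (hrel.mul_mul_eq ha)]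
    congr 1
    field_simp
    ring
  refine (h2z.mul h2v).mul_left_cancel ((h1v.mul h1z).mul_right_cancel ?_)
  rw [one_sub_smul_mul_Hfun_sub_Hfun_mul h2z h2v h1z h1v, mul_smul_comm, smul_mul_assoc,
    one_sub_smul_mul_one_sub_smul_mul_mul sandwich, smul_smul]
  congr 1
  generalize c * z ^ 2 - b * z - a = qz at hz
  generalize c * v ^ 2 - b * v - a = qv at hv
  field_simp
end

section
/- Let A be a unital associative ℂ-algebra and let σ₁,σ₂ ∈ A be such that the pair (σ₁,σ₂) satisfies the B₃ relations. Then σ₂³σ₁² − σ₂²σ₁³ = σ₂³ − σ₁³ + σ₁² − σ₂². -/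
/-- The pair `(x, y)` satisfies the defining relations of the algebra `B₃`. -/
def SatisfiesB3 {A : Type*} [Ring A] (x y : A) : Prop :=
  x * y * x = y * x * y ∧
  x ^ 2 * y - x * y ^ 2 = x ^ 2 - y ^ 2 + y - x ∧
  y ^ 3 * x - y * x ^ 3 = y ^ 2 * x - y * x ^ 2 + y ^ 3 - x ^ 3 - y ^ 2 + x ^ 2 ∧
  y ^ 4 * x - y * x ^ 4 = y ^ 2 * x - y * x ^ 2 + y ^ 4 - x ^ 4 - y ^ 2 + x ^ 2

/-- Relation (2.23) of the paper: in `B₃`,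
`σ₂³σ₁² - σ₂²σ₁³ = σ₂³ - σ₁³ + σ₁² - σ₂²`. -/
theorem B3_rel_lemma {A : Type*} [Ring A] (σ₁ σ₂ : A) (hrel : SatisfiesB3 σ₁ σ₂) :
    σ₂ ^ 3 * σ₁ ^ 2 - σ₂ ^ 2 * σ₁ ^ 3 = σ₂ ^ 3 - σ₁ ^ 3 + σ₁ ^ 2 - σ₂ ^ 2 := by
  obtain ⟨h1, h2, h3, h4⟩ := hrel
  have A : (σ₂ ^ 3 * σ₁ - σ₂ * σ₁ ^ 3) * σ₁ =
      (σ₂ ^ 2 * σ₁ - σ₂ * σ₁ ^ 2 + σ₂ ^ 3 - σ₁ ^ 3 - σ₂ ^ 2 + σ₁ ^ 2) * σ₁ := by rw [h3]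
  have B : σ₂ * (σ₂ ^ 3 * σ₁ - σ₂ * σ₁ ^ 3) =
      σ₂ * (σ₂ ^ 2 * σ₁ - σ₂ * σ₁ ^ 2 + σ₂ ^ 3 - σ₁ ^ 3 - σ₂ ^ 2 + σ₁ ^ 2) := by rw [h3]
  have key : σ₂ ^ 3 * σ₁ ^ 2 - σ₂ ^ 2 * σ₁ ^ 3 - (σ₂ ^ 3 - σ₁ ^ 3 + σ₁ ^ 2 - σ₂ ^ 2) =
      ((σ₂ ^ 3 * σ₁ - σ₂ * σ₁ ^ 3) * σ₁ -
        (σ₂ ^ 2 * σ₁ - σ₂ * σ₁ ^ 2 + σ₂ ^ 3 - σ₁ ^ 3 - σ₂ ^ 2 + σ₁ ^ 2) * σ₁) +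
      (σ₂ * (σ₂ ^ 3 * σ₁ - σ₂ * σ₁ ^ 3) -
        σ₂ * (σ₂ ^ 2 * σ₁ - σ₂ * σ₁ ^ 2 + σ₂ ^ 3 - σ₁ ^ 3 - σ₂ ^ 2 + σ₁ ^ 2)) -
      ((σ₂ ^ 4 * σ₁ - σ₂ * σ₁ ^ 4) -
        (σ₂ ^ 2 * σ₁ - σ₂ * σ₁ ^ 2 + σ₂ ^ 4 - σ₁ ^ 4 - σ₂ ^ 2 + σ₁ ^ 2)) +
      2 • ((σ₂ ^ 3 * σ₁ - σ₂ * σ₁ ^ 3) -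
        (σ₂ ^ 2 * σ₁ - σ₂ * σ₁ ^ 2 + σ₂ ^ 3 - σ₁ ^ 3 - σ₂ ^ 2 + σ₁ ^ 2)) := by
    noncomm_ring
  rw [A, B, h3, h4] at key
  simp at key
  exact sub_eq_zero.mp key
end

section
/- Let A be a unital associative ℂ-algebra and let σ₁,σ₂ ∈ A be such that (σ₁,σ₂) satisfies the B₃ relations. Let z ∈ ℂ with z ≠ 1 and such that 1 − zσ₁ and 1 − zσ₂ are invertible. Set Hᵢ(z) = σᵢ(1 − zσᵢ)⁻¹. Then σ₁H₂(z) − H₁(z)σ₂ = (1/(z−1))·(σ₂ − σ₁) − H₁(z) + H₂(z). -/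
/-- Relation (2.25) of the paper for `B₃`:
`σ₁H₂(z) - H₁(z)σ₂ = (1/(z-1))(σ₂ - σ₁) - H₁(z) + H₂(z)`. -/
theorem B3_H_lemma' {A : Type*} [Ring A] [Algebra ℂ A] (σ₁ σ₂ : A)
    (hrel : SatisfiesB3 σ₁ σ₂)
    (z : ℂ) (hz : z ≠ 1)
    (h1 : IsUnit (1 - z • σ₁)) (h2 : IsUnit (1 - z • σ₂)) :
    σ₁ * Hfun σ₂ z - Hfun σ₁ z * σ₂ =
      (1 / (z - 1)) • (σ₂ - σ₁) - Hfun σ₁ z + Hfun σ₂ z := by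
  obtain ⟨-, hb2, -, -⟩ := hrel
  have hz1 : z - 1 ≠ 0 := sub_ne_zero.mpr hz
  have hH2v : Hfun σ₂ z * (1 - z • σ₂) = σ₂ := by
    rw [Hfun, mul_assoc, Ring.inverse_mul_cancel _ h2, mul_one]
  have huH1 : (1 - z • σ₁) * Hfun σ₁ z = σ₁ := by
    have hc : (1 - z • σ₁) * σ₁ = σ₁ * (1 - z • σ₁) := by
      rw [sub_mul, mul_sub, one_mul, mul_one, smul_mul_assoc, mul_smul_comm]
    rw [Hfun, ← mul_assoc, hc, mul_assoc, Ring.mul_inverse_cancel _ h1, mul_one]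
  have key : σ₁ * (σ₁ * σ₂) = σ₁ * (σ₂ * σ₂) + (σ₁ * σ₁ - σ₂ * σ₂ + σ₂ - σ₁) := by
    have h := hb2
    simp only [pow_two] at h
    rw [sub_eq_iff_eq_add] at h
    rw [← mul_assoc, h]; abel
  apply h1.mul_left_cancel
  apply h2.mul_right_cancel
  have e1 : (1 - z • σ₁) * (σ₁ * Hfun σ₂ z - Hfun σ₁ z * σ₂) * (1 - z • σ₂)
      = (1 - z • σ₁) * (σ₁ * σ₂) - (σ₁ * σ₂) * (1 - z • σ₂) := by
    calc (1 - z • σ₁) * (σ₁ * Hfun σ₂ z - Hfun σ₁ z * σ₂) * (1 - z • σ₂)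
        = (1 - z • σ₁) * σ₁ * (Hfun σ₂ z * (1 - z • σ₂)) -
          (1 - z • σ₁) * Hfun σ₁ z * (σ₂ * (1 - z • σ₂)) := by
          simp only [mul_sub, sub_mul, mul_add, add_mul, smul_sub, smul_add, smul_smul,
            mul_smul_comm, smul_mul_assoc, mul_assoc, one_mul, mul_one]
          module
      _ = _ := by rw [hH2v, huH1]; noncomm_ring
  have e2 : (1 - z • σ₁) * ((1 / (z - 1)) • (σ₂ - σ₁) - Hfun σ₁ z + Hfun σ₂ z) * (1 - z • σ₂)
      = (1 / (z - 1)) • ((1 - z • σ₁) * (σ₂ - σ₁) * (1 - z • σ₂)) - σ₁ * (1 - z • σ₂)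
        + (1 - z • σ₁) * σ₂ := by
    calc (1 - z • σ₁) * ((1 / (z - 1)) • (σ₂ - σ₁) - Hfun σ₁ z + Hfun σ₂ z) * (1 - z • σ₂)
        = (1 / (z - 1)) • ((1 - z • σ₁) * (σ₂ - σ₁) * (1 - z • σ₂)) -
          ((1 - z • σ₁) * Hfun σ₁ z) * (1 - z • σ₂)
          + (1 - z • σ₁) * (Hfun σ₂ z * (1 - z • σ₂)) := by
          simp only [mul_sub, sub_mul, mul_add, add_mul, smul_sub, smul_add, smul_smul,
            mul_smul_comm, smul_mul_assoc, mul_assoc, one_mul, mul_one]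
          module
      _ = _ := by rw [hH2v, huH1]
  rw [e1, e2]
  simp only [mul_sub, sub_mul, smul_sub, one_mul, mul_one, smul_mul_assoc, mul_smul_comm,
    smul_smul, mul_assoc, key]
  match_scalars <;> field_simp <;> ring
end

section
/- Let A be a unital associative ℂ-algebra and let σ₁,σ₂ ∈ A be such that (σ₁,σ₂) satisfies the B₃ relations. Let z,v ∈ ℂ with z ≠ 1, v ≠ 1, and such that 1 − zσᵢ and 1 − vσᵢ are invertible for i = 1,2. Set Hᵢ(w) = σᵢ(1 − wσᵢ)⁻¹. Then H₂(v)H₁(z) − H₂(z)H₁(v) = ((v−z)/((v−1)(z−1)))·(σ₂²σ₁ − σ₂σ₁² + σ₁² − σ₂² − σ₁ + σ₂) + (1/(v−1))·(H₂(z) − H₁(z)) − (1/(z−1))·(H₂(v) − H₁(v)). -/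
private lemma pw3 {A : Type*} [Monoid A] (a : A) : a ^ 3 = a * (a * a) := by
  rw [pow_succ, pow_two, mul_assoc]

private lemma pw4 {A : Type*} [Monoid A] (a : A) : a ^ 4 = a * (a * (a * a)) := by
  rw [pow_succ, pw3, mul_assoc, mul_assoc]

private lemma Hcancel {A : Type*} [Ring A] [Algebra ℂ A] (s : A) (w : ℂ)
    (h : IsUnit (1 - w • s)) : (1 - w • s) * Hfun s w = s := by
  have comm : (1 - w • s) * s = s * (1 - w • s) := by
    rw [sub_mul, mul_sub, one_mul, mul_one, smul_mul_assoc, mul_smul_comm]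
  rw [Hfun, ← mul_assoc, comm, mul_assoc, Ring.mul_inverse_cancel _ h, mul_one]

private lemma Hcancel' {A : Type*} [Ring A] [Algebra ℂ A] (s : A) (w : ℂ)
    (h : IsUnit (1 - w • s)) : Hfun s w * (1 - w • s) = s := by
  rw [Hfun, mul_assoc, Ring.inverse_mul_cancel _ h, mul_one]

set_option maxHeartbeats 3000000 in
/-- Relation (2.26) of the paper for `B₃`:
`H₂(v)H₁(z) - H₂(z)H₁(v) = ((v-z)/((v-1)(z-1)))(σ₂²σ₁ - σ₂σ₁² + σ₁² - σ₂² - σ₁ + σ₂)`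
`+ (1/(v-1))(H₂(z) - H₁(z)) - (1/(z-1))(H₂(v) - H₁(v))`. -/
theorem B3_HH_lemma {A : Type*} [Ring A] [Algebra ℂ A] (σ₁ σ₂ : A)
    (hrel : SatisfiesB3 σ₁ σ₂)
    (z v : ℂ) (hz : z ≠ 1) (hv : v ≠ 1)
    (h1z : IsUnit (1 - z • σ₁)) (h2z : IsUnit (1 - z • σ₂))
    (h1v : IsUnit (1 - v • σ₁)) (h2v : IsUnit (1 - v • σ₂)) :
    Hfun σ₂ v * Hfun σ₁ z - Hfun σ₂ z * Hfun σ₁ v =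
      ((v - z) / ((v - 1) * (z - 1))) •
        (σ₂ ^ 2 * σ₁ - σ₂ * σ₁ ^ 2 + σ₁ ^ 2 - σ₂ ^ 2 - σ₁ + σ₂) +
      (1 / (v - 1)) • (Hfun σ₂ z - Hfun σ₁ z) -
      (1 / (z - 1)) • (Hfun σ₂ v - Hfun σ₁ v) := by
  obtain ⟨-, -, h3, h4⟩ := hrel
  have hv1 : v - 1 ≠ 0 := sub_ne_zero_of_ne hv
  have hz1 : z - 1 ≠ 0 := sub_ne_zero_of_ne hz
  set P₂ := (1 - v • σ₂) * (1 - z • σ₂) with hP2def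
  set P₁ := (1 - z • σ₁) * (1 - v • σ₁) with hP1def
  have commP2 : (1 - v • σ₂) * (1 - z • σ₂) = (1 - z • σ₂) * (1 - v • σ₂) := by
    simp only [mul_sub, sub_mul, one_mul, mul_one, smul_mul_assoc, mul_smul_comm, smul_smul]
    match_scalars <;> ring
  have commP1 : (1 - z • σ₁) * (1 - v • σ₁) = (1 - v • σ₁) * (1 - z • σ₁) := by
    simp only [mul_sub, sub_mul, one_mul, mul_one, smul_mul_assoc, mul_smul_comm, smul_smul]
    match_scalars <;> ring
  have K2v : P₂ * Hfun σ₂ v = σ₂ - z • σ₂ ^ 2 := by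
    rw [hP2def, commP2, mul_assoc, Hcancel σ₂ v h2v, sub_mul, one_mul, smul_mul_assoc, ← pow_two]
  have K2z : P₂ * Hfun σ₂ z = σ₂ - v • σ₂ ^ 2 := by
    rw [hP2def, mul_assoc, Hcancel σ₂ z h2z, sub_mul, one_mul, smul_mul_assoc, ← pow_two]
  have K1z : Hfun σ₁ z * P₁ = σ₁ - v • σ₁ ^ 2 := by
    rw [hP1def, ← mul_assoc, Hcancel' σ₁ z h1z, mul_sub, mul_one, mul_smul_comm, ← pow_two]
  have K1v : Hfun σ₁ v * P₁ = σ₁ - z • σ₁ ^ 2 := by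
    rw [hP1def, commP1, ← mul_assoc, Hcancel' σ₁ v h1v, mul_sub, mul_one, mul_smul_comm,
      ← pow_two]
  have hP2u : IsUnit P₂ := h2v.mul h2z
  have hP1u : IsUnit P₁ := h1z.mul h1v
  apply hP2u.mul_left_cancel
  apply hP1u.mul_right_cancel
  have EL : P₂ * (Hfun σ₂ v * Hfun σ₁ z - Hfun σ₂ z * Hfun σ₁ v) * P₁
      = (σ₂ - z • σ₂ ^ 2) * (σ₁ - v • σ₁ ^ 2) - (σ₂ - v • σ₂ ^ 2) * (σ₁ - z • σ₁ ^ 2) := by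
    calc P₂ * (Hfun σ₂ v * Hfun σ₁ z - Hfun σ₂ z * Hfun σ₁ v) * P₁
        = (P₂ * Hfun σ₂ v) * (Hfun σ₁ z * P₁) - (P₂ * Hfun σ₂ z) * (Hfun σ₁ v * P₁) := by
          noncomm_ring
      _ = _ := by rw [K2v, K2z, K1z, K1v]
  have ER : P₂ * (((v - z) / ((v - 1) * (z - 1))) •
        (σ₂ ^ 2 * σ₁ - σ₂ * σ₁ ^ 2 + σ₁ ^ 2 - σ₂ ^ 2 - σ₁ + σ₂) +
      (1 / (v - 1)) • (Hfun σ₂ z - Hfun σ₁ z) -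
      (1 / (z - 1)) • (Hfun σ₂ v - Hfun σ₁ v)) * P₁
      = ((v - z) / ((v - 1) * (z - 1))) •
          (P₂ * (σ₂ ^ 2 * σ₁ - σ₂ * σ₁ ^ 2 + σ₁ ^ 2 - σ₂ ^ 2 - σ₁ + σ₂) * P₁) +
        (1 / (v - 1)) • ((σ₂ - v • σ₂ ^ 2) * P₁ - P₂ * (σ₁ - v • σ₁ ^ 2)) -
        (1 / (z - 1)) • ((σ₂ - z • σ₂ ^ 2) * P₁ - P₂ * (σ₁ - z • σ₁ ^ 2)) := by
    calc P₂ * (((v - z) / ((v - 1) * (z - 1))) •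
          (σ₂ ^ 2 * σ₁ - σ₂ * σ₁ ^ 2 + σ₁ ^ 2 - σ₂ ^ 2 - σ₁ + σ₂) +
        (1 / (v - 1)) • (Hfun σ₂ z - Hfun σ₁ z) -
        (1 / (z - 1)) • (Hfun σ₂ v - Hfun σ₁ v)) * P₁
        = ((v - z) / ((v - 1) * (z - 1))) •
            (P₂ * (σ₂ ^ 2 * σ₁ - σ₂ * σ₁ ^ 2 + σ₁ ^ 2 - σ₂ ^ 2 - σ₁ + σ₂) * P₁) +
          (1 / (v - 1)) • ((P₂ * Hfun σ₂ z) * P₁ - P₂ * (Hfun σ₁ z * P₁)) -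
          (1 / (z - 1)) • ((P₂ * Hfun σ₂ v) * P₁ - P₂ * (Hfun σ₁ v * P₁)) := by
          simp only [smul_sub, smul_add, mul_add, add_mul, mul_sub, sub_mul,
            mul_smul_comm, smul_mul_assoc, mul_assoc]
      _ = _ := by rw [K2z, K1z, K2v, K1v]
  rw [EL, ER]
  have r3 : σ₂ ^ 3 * σ₁ - σ₂ * σ₁ ^ 3 -
      (σ₂ ^ 2 * σ₁ - σ₂ * σ₁ ^ 2 + σ₂ ^ 3 - σ₁ ^ 3 - σ₂ ^ 2 + σ₁ ^ 2) = 0 :=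
    sub_eq_zero_of_eq h3
  have r4 : σ₂ ^ 4 * σ₁ - σ₂ * σ₁ ^ 4 -
      (σ₂ ^ 2 * σ₁ - σ₂ * σ₁ ^ 2 + σ₂ ^ 4 - σ₁ ^ 4 - σ₂ ^ 2 + σ₁ ^ 2) = 0 :=
    sub_eq_zero_of_eq h4
  have hc : (v - 1) * (z - 1) ≠ 0 := mul_ne_zero hv1 hz1
  have hs1 : ((v - 1) * (z - 1)) * ((v - z) / ((v - 1) * (z - 1))) = v - z := by
    field_simp
  have hs2 : ((v - 1) * (z - 1)) * (1 / (v - 1)) = z - 1 := by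
    field_simp
  have hs3 : ((v - 1) * (z - 1)) * (1 / (z - 1)) = v - 1 := by
    field_simp
  have cancel : ∀ a b : A, ((v - 1) * (z - 1)) • a = ((v - 1) * (z - 1)) • b → a = b := by
    intro a b h
    have h2 := congrArg (fun t => ((v - 1) * (z - 1))⁻¹ • t) h
    simp only [smul_smul, inv_mul_cancel₀ hc, one_smul] at h2
    exact h2
  apply cancel
  conv_rhs => rw [smul_sub, smul_add, smul_smul, smul_smul, smul_smul, hs1, hs2, hs3]
  have comb : ((v - 1) * (z - 1)) •
        ((σ₂ - z • σ₂ ^ 2) * (σ₁ - v • σ₁ ^ 2) - (σ₂ - v • σ₂ ^ 2) * (σ₁ - z • σ₁ ^ 2))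
      = ((v - z) •
          (P₂ * (σ₂ ^ 2 * σ₁ - σ₂ * σ₁ ^ 2 + σ₁ ^ 2 - σ₂ ^ 2 - σ₁ + σ₂) * P₁) +
        (z - 1) • ((σ₂ - v • σ₂ ^ 2) * P₁ - P₂ * (σ₁ - v • σ₁ ^ 2)) -
        (v - 1) • ((σ₂ - z • σ₂ ^ 2) * P₁ - P₂ * (σ₁ - z • σ₁ ^ 2)))
      + ((v^2 - v^3 + z*v^2 - z^2 - z^2*v + z^3)) •
          (σ₂ ^ 3 * σ₁ - σ₂ * σ₁ ^ 3 -
            (σ₂ ^ 2 * σ₁ - σ₂ * σ₁ ^ 2 + σ₂ ^ 3 - σ₁ ^ 3 - σ₂ ^ 2 + σ₁ ^ 2))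
      + ((z^3 - v^3)) •
          ((σ₂ ^ 3 * σ₁ - σ₂ * σ₁ ^ 3 -
            (σ₂ ^ 2 * σ₁ - σ₂ * σ₁ ^ 2 + σ₂ ^ 3 - σ₁ ^ 3 - σ₂ ^ 2 + σ₁ ^ 2)) * σ₁)
      + ((z^3 - v^3)) •
          (σ₂ * (σ₂ ^ 3 * σ₁ - σ₂ * σ₁ ^ 3 -
            (σ₂ ^ 2 * σ₁ - σ₂ * σ₁ ^ 2 + σ₂ ^ 3 - σ₁ ^ 3 - σ₂ ^ 2 + σ₁ ^ 2)))
      + ((z*v^3 - z^3*v)) •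
          (σ₂ * (σ₂ ^ 3 * σ₁ - σ₂ * σ₁ ^ 3 -
            (σ₂ ^ 2 * σ₁ - σ₂ * σ₁ ^ 2 + σ₂ ^ 3 - σ₁ ^ 3 - σ₂ ^ 2 + σ₁ ^ 2)) * σ₁)
      + ((z^2*v^3 - z^3*v^2)) •
          ((σ₂ ^ 3 * σ₁ - σ₂ * σ₁ ^ 3 -
            (σ₂ ^ 2 * σ₁ - σ₂ * σ₁ ^ 2 + σ₂ ^ 3 - σ₁ ^ 3 - σ₂ ^ 2 + σ₁ ^ 2)) * σ₁ ^ 2)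
      + ((z^2*v^3 - z^3*v^2)) •
          ((σ₂ ^ 3 * σ₁ - σ₂ * σ₁ ^ 3 -
            (σ₂ ^ 2 * σ₁ - σ₂ * σ₁ ^ 2 + σ₂ ^ 3 - σ₁ ^ 3 - σ₂ ^ 2 + σ₁ ^ 2)) * σ₁ ^ 3)
      + ((v^3 - z*v^2 + z^2*v - z^3)) •
          (σ₂ ^ 4 * σ₁ - σ₂ * σ₁ ^ 4 -
            (σ₂ ^ 2 * σ₁ - σ₂ * σ₁ ^ 2 + σ₂ ^ 4 - σ₁ ^ 4 - σ₂ ^ 2 + σ₁ ^ 2))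
      + ((z^3*v^2 - z^2*v^3)) •
          ((σ₂ ^ 4 * σ₁ - σ₂ * σ₁ ^ 4 -
            (σ₂ ^ 2 * σ₁ - σ₂ * σ₁ ^ 2 + σ₂ ^ 4 - σ₁ ^ 4 - σ₂ ^ 2 + σ₁ ^ 2)) * σ₁ ^ 2) := by
    rw [hP2def, hP1def]
    simp only [mul_sub, sub_mul, mul_add, add_mul, smul_sub, smul_add, smul_mul_assoc,
      mul_smul_comm, smul_smul, mul_one, one_mul, pow_two, pw3, pw4, mul_assoc]
    match_scalars <;> ring
  rw [comb, r3, r4]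
  simp only [zero_mul, mul_zero, smul_zero, add_zero]
end
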